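/- arXiv:2112.15226 — 3 statements merged into one kernel-verified Lean document; each statement's English description precedes it below -/
import Mathlib

section
/- For every complex z with Re(z) > 0, √(2π) · z^{-3/2} · λ(z) = ∫_0^∞ e^{-zξ} (q_+(ξ) - q_-(ξ)) dξ, where for ξ > 0, q_-(ξ) < q_+(ξ) are the two positive real roots of q - log q - 1 = ξ, and λ(z) = Γ(z)/(√(2π) z^{z-1/2} e^{-z}). -/
/-!
Write `φ q = q - log q - 1`. Since `φ` is strictly convex on `(0, ∞)`, its sublevel set
`{q > 0 | φ q ≤ ξ}` is the interval `[q₋ ξ, q₊ ξ]`, so `q₊ - q₋` is the distribution function of `φ`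
under Lebesgue measure on `(0, ∞)`. By Fubini its Laplace transform is
`z⁻¹ ∫₀^∞ e^{-z φ q} dq = z⁻¹ eᶻ ∫₀^∞ qᶻ e^{-z q} dq = z⁻¹ eᶻ Γ(z + 1) z^{-(z+1)}`,
which is the left-hand side. The last Gamma integral is classical for real `z` and extends to
`Re z > 0` by analytic continuation in the scale parameter.
-/

open MeasureTheory Set Filter Topology

namespace Complex

lemma norm_ofReal_cpow_mul_exp_neg_mul {a w : ℂ} {t : ℝ} (ht : 0 < t) :
    ‖(t : ℂ) ^ a * exp (-(w * t))‖ = t ^ a.re * Real.exp (-(w.re * t)) := by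
  rw [norm_mul, norm_cpow_eq_rpow_re_of_pos ht, norm_exp]
  simp

lemma aestronglyMeasurable_cpow_mul_exp_neg_mul (a w : ℂ) :
    AEStronglyMeasurable (fun t : ℝ ↦ (t : ℂ) ^ a * exp (-(w * t))) (volume.restrict (Ioi 0)) := by
  refine ContinuousOn.aestronglyMeasurable (fun t ht ↦ ?_) measurableSet_Ioi
  exact ((continuousAt_ofReal_cpow_const _ _ (Or.inr (ne_of_gt ht))).mul
    (by fun_prop)).continuousWithinAt

lemma integrableOn_cpow_mul_exp_neg_mul_Ioi {a w : ℂ} (ha : 0 < a.re) (hw : 0 < w.re) :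
    IntegrableOn (fun t : ℝ ↦ (t : ℂ) ^ (a - 1) * exp (-(w * t))) (Ioi 0) := by
  have hbound := integrableOn_rpow_mul_exp_neg_mul_rpow (p := 1)
    (by simpa using ha : -1 < (a - 1).re) one_pos hw
  refine hbound.mono' (aestronglyMeasurable_cpow_mul_exp_neg_mul _ w) ?_
  filter_upwards [ae_restrict_mem measurableSet_Ioi] with t ht
  rw [norm_ofReal_cpow_mul_exp_neg_mul ht, Real.rpow_one, neg_mul]

lemma differentiableOn_integral_cpow_mul_exp_neg_mul_Ioi {a : ℂ} (ha : 0 < a.re) :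
    DifferentiableOn ℂ (fun w : ℂ ↦ ∫ t in Ioi (0 : ℝ), (t : ℂ) ^ (a - 1) * exp (-(w * t)))
      {w | 0 < w.re} := by
  intro w₀ hw₀
  set ε := w₀.re / 2
  have hε : 0 < ε := half_pos hw₀
  have hball : ∀ w ∈ Metric.ball w₀ ε, ε ≤ w.re := fun w hw ↦ by
    have := (abs_re_le_norm (w - w₀)).trans_lt (mem_ball_iff_norm.mp hw)
    rw [sub_re, abs_lt] at this
    linarith [this.1, show ε = w₀.re / 2 from rfl]
  refine (hasDerivAt_integral_of_dominated_loc_of_deriv_le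
    (F' := fun w (t : ℝ) ↦ (t : ℂ) ^ (a - 1) * exp (-(w * t)) * -t)
    (bound := fun t : ℝ ↦ t ^ a.re * Real.exp (-(ε * t)))
    (Metric.ball_mem_nhds w₀ hε)
    (Eventually.of_forall (aestronglyMeasurable_cpow_mul_exp_neg_mul _))
    (integrableOn_cpow_mul_exp_neg_mul_Ioi ha hw₀) ?_ ?_ ?_ ?_).2.differentiableAt
    |>.differentiableWithinAt
  · exact (aestronglyMeasurable_cpow_mul_exp_neg_mul _ w₀).mul
      (by fun_prop : Continuous fun t : ℝ ↦ -(t : ℂ)).aestronglyMeasurable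
  · filter_upwards [ae_restrict_mem measurableSet_Ioi] with t (ht : 0 < t) w hw
    rw [norm_mul, norm_ofReal_cpow_mul_exp_neg_mul ht, norm_neg, norm_real,
      Real.norm_of_nonneg ht.le, sub_re, one_re, Real.rpow_sub_one ht.ne']
    calc t ^ a.re / t * Real.exp (-(w.re * t)) * t = t ^ a.re * Real.exp (-(w.re * t)) := by
          field_simp
      _ ≤ t ^ a.re * Real.exp (-(ε * t)) := by gcongr; exact hball w hw
  · have := integrableOn_rpow_mul_exp_neg_mul_rpow (p := 1) (s := a.re) (by linarith) one_pos hε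
    simp only [Real.rpow_one, neg_mul] at this
    exact this
  · filter_upwards with t w _
    exact ((((hasDerivAt_id w).mul_const (t : ℂ)).neg.cexp).const_mul _).congr_deriv (by simp only [Pi.neg_apply, id, one_mul]; ring)

lemma integral_cpow_mul_exp_neg_mul_Ioi_of_re_pos {a w : ℂ} (ha : 0 < a.re) (hw : 0 < w.re) :
    ∫ t in Ioi (0 : ℝ), (t : ℂ) ^ (a - 1) * exp (-(w * t)) = w ^ (-a) * Gamma a := by
  set U := {w : ℂ | 0 < w.re}
  have hU : IsOpen U := isOpen_lt continuous_const continuous_re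
  have hf := (differentiableOn_integral_cpow_mul_exp_neg_mul_Ioi ha).analyticOnNhd hU
  have hg : AnalyticOnNhd ℂ (fun w : ℂ ↦ w ^ (-a) * Gamma a) U :=
    DifferentiableOn.analyticOnNhd (fun w hw ↦
      ((differentiableAt_id.cpow_const (Or.inl hw)).mul_const _).differentiableWithinAt) hU
  have hreal : ∀ r : ℝ, 0 < r →
      ∫ t in Ioi (0 : ℝ), (t : ℂ) ^ (a - 1) * exp (-(r * t)) = (r : ℂ) ^ (-a) * Gamma a := by
    intro r hr
    have harg : (r : ℂ).arg ≠ Real.pi := by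
      rw [arg_ofReal_of_nonneg hr.le]; exact Real.pi_ne_zero.symm
    rw [integral_cpow_mul_exp_neg_mul_Ioi ha hr, one_div, inv_cpow _ _ harg, ← cpow_neg]
  have hfreq : ∃ᶠ w in 𝓝[≠] (1 : ℂ),
      ∫ t in Ioi (0 : ℝ), (t : ℂ) ^ (a - 1) * exp (-(w * t)) = w ^ (-a) * Gamma a := by
    have hmap : Tendsto ((↑) : ℝ → ℂ) (𝓝[≠] 1) (𝓝[≠] 1) :=
      continuous_ofReal.continuousWithinAt.tendsto_nhdsWithin fun x hx ↦ by simpa using hx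
    refine hmap.frequently (Eventually.frequently ?_)
    filter_upwards [nhdsWithin_le_nhds (Ioi_mem_nhds one_pos)] with r hr using hreal r hr
  exact hf.eqOn_of_preconnected_of_frequently_eq hg (convex_halfSpace_re_gt 0).isPreconnected
    (by simp) hfreq hw

end Complex

lemma setIntegral_Ioi_zero_indicator_Ici {E : Type*} [NormedAddCommGroup E] [NormedSpace ℝ E]
    {a : ℝ} (ha : 0 ≤ a) (f : ℝ → E) :
    ∫ ξ in Ioi 0, (Ici a).indicator f ξ = ∫ ξ in Ioi a, f ξ := by
  rw [setIntegral_indicator measurableSet_Ici]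
  refine setIntegral_congr_set ?_
  have h := (EventuallyEq.rfl (f := Ioi (0 : ℝ))).inter (Ioi_ae_eq_Ici (μ := volume) (a := a)).symm
  rwa [Ioi_inter_Ioi, sup_eq_right.mpr ha] at h

lemma integral_Ioi_zero_indicator_Ici_cexp_neg_mul {z : ℂ} (hz : 0 < z.re) {a : ℝ} (ha : 0 ≤ a) :
    ∫ ξ in Ioi 0, (Ici a).indicator (fun ξ : ℝ ↦ Complex.exp (-z * ξ)) ξ =
      Complex.exp (-z * a) / z := by
  rw [setIntegral_Ioi_zero_indicator_Ici ha, integral_exp_mul_complex_Ioi (by simpa using hz)]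
  ring

lemma integral_Ioi_zero_indicator_Ici_exp_neg_mul {c : ℝ} (hc : 0 < c) {a : ℝ} (ha : 0 ≤ a) :
    ∫ ξ in Ioi 0, (Ici a).indicator (fun ξ ↦ Real.exp (-c * ξ)) ξ = Real.exp (-c * a) / c := by
  rw [setIntegral_Ioi_zero_indicator_Ici ha, integral_exp_mul_Ioi (by simpa using hc)]
  ring

theorem integral_exp_neg_mul_measureReal_setOf_le {α : Type*} [MeasurableSpace α] {μ : Measure α}
    [SFinite μ] {φ : α → ℝ} (hφ : Measurable φ) (hφ0 : 0 ≤ᵐ[μ] φ) {z : ℂ} (hz : 0 < z.re)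
    (hint : Integrable (fun x ↦ Real.exp (-z.re * φ x)) μ) :
    ∫ ξ in Ioi (0 : ℝ), Complex.exp (-z * ξ) * μ.real {x | φ x ≤ ξ} =
      (∫ x, Complex.exp (-z * φ x) ∂μ) / z := by
  set F : ℝ × α → ℂ := {p | φ p.2 ≤ p.1}.indicator fun p ↦ Complex.exp (-z * p.1)
  have hslice_x : ∀ x, (fun ξ ↦ F (ξ, x)) =
      (Ici (φ x)).indicator fun ξ : ℝ ↦ Complex.exp (-z * ξ) := fun _ ↦ rfl
  have hslice_ξ : ∀ ξ : ℝ, (fun x ↦ F (ξ, x)) =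
      {x | φ x ≤ ξ}.indicator fun _ ↦ Complex.exp (-z * ξ) := fun _ ↦ rfl
  have hF : Integrable F ((volume.restrict (Ioi 0)).prod μ) := by
    have hFmeas : AEStronglyMeasurable F ((volume.restrict (Ioi 0)).prod μ) :=
      (Measurable.aestronglyMeasurable (by fun_prop)).indicator
        (measurableSet_le (hφ.comp measurable_snd) measurable_fst)
    rw [integrable_prod_iff' hFmeas]
    refine ⟨Eventually.of_forall fun x ↦ ?_, (hint.div_const z.re).congr ?_⟩
    · rw [hslice_x]
      exact (integrableOn_exp_mul_complex_Ioi (by simpa using hz) 0).indicator measurableSet_Ici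
    · filter_upwards [hφ0] with x hx
      have hnorm : (fun ξ ↦ ‖F (ξ, x)‖) = (Ici (φ x)).indicator fun ξ ↦ Real.exp (-z.re * ξ) := by
        ext ξ
        simp only [F, indicator, mem_ofPred_eq, mem_Ici]
        split_ifs <;> simp [Complex.norm_exp]
      rw [hnorm, integral_Ioi_zero_indicator_Ici_exp_neg_mul hz hx]
  calc ∫ ξ in Ioi (0 : ℝ), Complex.exp (-z * ξ) * μ.real {x | φ x ≤ ξ}
      = ∫ ξ in Ioi (0 : ℝ), ∫ x, F (ξ, x) ∂μ := by
        congr 1 with ξ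
        rw [hslice_ξ, integral_indicator_const _ (measurableSet_le hφ measurable_const),
          Complex.real_smul, mul_comm]
    _ = ∫ x, (∫ ξ in Ioi (0 : ℝ), F (ξ, x)) ∂μ := integral_integral_swap hF
    _ = ∫ x, Complex.exp (-z * φ x) / z ∂μ := by
        refine integral_congr_ae ?_
        filter_upwards [hφ0] with x hx
        rw [hslice_x, integral_Ioi_zero_indicator_Ici_cexp_neg_mul hz hx]
    _ = (∫ x, Complex.exp (-z * φ x) ∂μ) / z := integral_div _ _

theorem StrictConvexOn.setOf_le_inter_eq_Icc {D : Set ℝ} {f : ℝ → ℝ} (hf : StrictConvexOn ℝ D f)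
    {a b c : ℝ} (ha : a ∈ D) (hb : b ∈ D) (hab : a < b) (hfa : f a = c) (hfb : f b = c) :
    {x | f x ≤ c} ∩ D = Icc a b := by
  ext x
  constructor
  · rintro ⟨hxc, hxD⟩
    by_contra hx
    rcases not_and_or.mp hx with hxa | hbx
    · rw [not_le] at hxa
      have := hf.lt_on_openSegment hxD hb (hxa.trans hab).ne (z := a)
        (by rw [openSegment_eq_Ioo (hxa.trans hab)]; exact ⟨hxa, hab⟩)
      rw [hfa, hfb] at this
      exact this.not_ge (max_le hxc le_rfl)
    · rw [not_le] at hbx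
      have := hf.lt_on_openSegment ha hxD (hab.trans hbx).ne (z := b)
        (by rw [openSegment_eq_Ioo (hab.trans hbx)]; exact ⟨hab, hbx⟩)
      rw [hfa, hfb] at this
      exact this.not_ge (max_le le_rfl hxc)
  · intro hx
    refine ⟨?_, hf.1.ordConnected.out ha hb hx⟩
    have := hf.convexOn.le_on_segment ha hb (by rwa [segment_eq_Icc hab.le])
    rw [hfa, hfb, max_self] at this
    exact this

lemma strictConvexOn_sub_log_sub_one : StrictConvexOn ℝ (Ioi 0) fun q ↦ q - Real.log q - 1 :=
  (((convexOn_id (convex_Ioi 0)).sub_strictConcaveOn strictConcaveOn_log_Ioi).add_const (-1)).congr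
    fun q _ ↦ by simp only [Pi.add_apply, Pi.sub_apply, id]; ring

lemma Complex.exp_neg_mul_sub_log_sub_one (z : ℂ) {q : ℝ} (hq : 0 < q) :
    Complex.exp (-z * ↑(q - Real.log q - 1)) =
      Complex.exp z * ((q : ℂ) ^ z * Complex.exp (-(z * q))) := by
  rw [Complex.cpow_def_of_ne_zero (Complex.ofReal_ne_zero.mpr hq.ne'),
    ← Complex.ofReal_log hq.le, ← Complex.exp_add, ← Complex.exp_add]
  push_cast
  ring_nf

lemma Complex.integrableOn_exp_neg_mul_sub_log_sub_one {z : ℂ} (hz : 0 < z.re) :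
    IntegrableOn (fun q : ℝ ↦ Complex.exp (-z * ↑(q - Real.log q - 1))) (Ioi 0) := by
  have h := Complex.integrableOn_cpow_mul_exp_neg_mul_Ioi (a := z + 1)
    (by rw [Complex.add_re, Complex.one_re]; linarith) hz
  rw [add_sub_cancel_right] at h
  exact IntegrableOn.congr_fun (h.const_mul _)
    (fun _ hq ↦ (Complex.exp_neg_mul_sub_log_sub_one z hq).symm) measurableSet_Ioi

lemma Complex.integral_exp_neg_mul_sub_log_sub_one {z : ℂ} (hz : 0 < z.re) :
    ∫ q in Ioi (0 : ℝ), Complex.exp (-z * ↑(q - Real.log q - 1)) =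
      Complex.exp z * (z ^ (-(z + 1)) * Complex.Gamma (z + 1)) := by
  have h := Complex.integral_cpow_mul_exp_neg_mul_Ioi_of_re_pos (a := z + 1)
    (by rw [Complex.add_re, Complex.one_re]; linarith) hz
  rw [add_sub_cancel_right] at h
  rw [setIntegral_congr_fun measurableSet_Ioi fun q hq ↦
    Complex.exp_neg_mul_sub_log_sub_one z hq, integral_const_mul, h]

lemma measureReal_restrict_Ioi_setOf_sub_log_sub_one_le {ξ a b : ℝ} (ha : 0 < a) (hab : a < b)
    (hfa : a - Real.log a - 1 = ξ) (hfb : b - Real.log b - 1 = ξ) :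
    (volume.restrict (Ioi 0)).real {q | q - Real.log q - 1 ≤ ξ} = b - a := by
  rw [measureReal_restrict_apply (measurableSet_le (by fun_prop) measurable_const),
    strictConvexOn_sub_log_sub_one.setOf_le_inter_eq_Icc ha (ha.trans hab) hab hfa hfb,
    Real.volume_real_Icc_of_le hab.le]

lemma Complex.sqrt_two_pi_mul_cpow_mul_Gamma_div {z : ℂ} (hz : z ≠ 0) :
    (Real.sqrt (2 * Real.pi) : ℂ) * z ^ (-(3 / 2 : ℂ)) *
        (Complex.Gamma z / ((Real.sqrt (2 * Real.pi) : ℂ) * z ^ (z - 1 / 2) * Complex.exp (-z))) =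
      Complex.exp z * (z ^ (-(z + 1)) * Complex.Gamma (z + 1)) / z := by
  have hsqrt : (Real.sqrt (2 * Real.pi) : ℂ) ≠ 0 := Complex.ofReal_ne_zero.mpr (by positivity)
  have hpow : z ^ (z - 1 / 2) ≠ 0 := by simp [Complex.cpow_eq_zero_iff, hz]
  rw [Complex.Gamma_add_one z hz, Complex.exp_neg,
    show -(3 / 2 : ℂ) = -(z + 1) + (z - 1 / 2) by ring, Complex.cpow_add _ _ hz]
  generalize z ^ (z - 1 / 2) = c at hpow ⊢
  field_simp

theorem minor_laplace_repr (qm qp : ℝ → ℝ)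
    (hroots : ∀ ξ : ℝ, 0 < ξ →
      0 < qm ξ ∧ qm ξ < qp ξ ∧
      qm ξ - Real.log (qm ξ) - 1 = ξ ∧ qp ξ - Real.log (qp ξ) - 1 = ξ ∧
      ∀ q : ℝ, 0 < q → q - Real.log q - 1 = ξ → q = qm ξ ∨ q = qp ξ)
    (z : ℂ) (hz : 0 < z.re) :
    (Real.sqrt (2 * Real.pi) : ℂ) * z ^ (-(3/2 : ℂ)) *
        (Complex.Gamma z /
          ((Real.sqrt (2 * Real.pi) : ℂ) * z ^ (z - 1/2) * Complex.exp (-z))) =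
      ∫ ξ in Set.Ioi (0 : ℝ),
        Complex.exp (-z * ξ) * ((qp ξ : ℂ) - (qm ξ : ℂ)) := by
  have hz0 : z ≠ 0 := by rintro rfl; simp at hz
  have hφ0 : 0 ≤ᵐ[volume.restrict (Ioi 0)] fun q : ℝ ↦ q - Real.log q - 1 := by
    filter_upwards [ae_restrict_mem measurableSet_Ioi] with q (hq : 0 < q)
    show 0 ≤ q - Real.log q - 1
    linarith [Real.log_le_sub_one_of_pos hq]
  have hnorm : Integrable (fun q : ℝ ↦ Real.exp (-z.re * (q - Real.log q - 1)))
      (volume.restrict (Ioi 0)) := by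
    simpa [Complex.norm_exp] using (Complex.integrableOn_exp_neg_mul_sub_log_sub_one hz).norm
  rw [Complex.sqrt_two_pi_mul_cpow_mul_Gamma_div hz0,
    ← Complex.integral_exp_neg_mul_sub_log_sub_one hz,
    ← integral_exp_neg_mul_measureReal_setOf_le (by fun_prop) hφ0 hz hnorm]
  refine setIntegral_congr_fun measurableSet_Ioi fun ξ hξ ↦ ?_
  obtain ⟨hm, hlt, hqm, hqp, -⟩ := hroots ξ hξ
  rw [measureReal_restrict_Ioi_setOf_sub_log_sub_one_le hm hlt hqm hqp, Complex.ofReal_sub]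
end

section
/- The function ξ ↦ ξ^{-2}((ξ/2)·coth(ξ/2) - 1), a priori defined for 0 < |ξ| < 2π, extends to a meromorphic function on ℂ, holomorphic at 0, whose poles are exactly the points of 2πi·ℤ \ {0}, and all these poles are simple. -/
/-!
Write `Eₖ` for the `k`-th iterated divided difference of `exp` at `0`, an entire function with
`Eₖ 0 = 1 / k!` and `ξ Eₖ₊₁ ξ = Eₖ ξ - 1 / k!`. Clearing the factor `ξ³` shared by numerator and
denominator gives `ξ⁻² ((ξ / 2) coth (ξ / 2) - 1) = (E₂ / 2 - E₃) / E₁` away from `0`, and the right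
side is holomorphic wherever `E₁ ≠ 0`, in particular at `0`. The zeros of
`E₁ = (exp ξ - 1) / ξ` are the points `p ∈ 2πiℤ \ {0}`; they are simple because `p E₁'(p) = 1`,
while `p² (E₂ / 2 - E₃)(p) = 1`, so each of them is a simple pole.
-/

open Complex Function

theorem Complex.differentiable_dslope {E : Type*} [NormedAddCommGroup E] [NormedSpace ℂ E]
    [CompleteSpace E] {f : ℂ → E} (hf : Differentiable ℂ f) (c : ℂ) : Differentiable ℂ (dslope f c) :=
  differentiableOn_univ.mp ((differentiableOn_dslope Filter.univ_mem).mpr hf.differentiableOn)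

theorem Complex.cosh_half_div_sinh_half (ξ : ℂ) :
    cosh (ξ / 2) / sinh (ξ / 2) = (exp ξ + 1) / (exp ξ - 1) := by
  have hexp : exp ξ = exp (ξ / 2) * exp (ξ / 2) := by rw [← exp_add, add_halves]
  rw [cosh, sinh, div_div_div_cancel_right₀ two_ne_zero, hexp, exp_neg,
    ← mul_div_mul_left _ _ (exp_ne_zero (ξ / 2))]
  congr 1 <;> field_simp

theorem norm_two_pi_I_mul_intCast (n : ℤ) :
    ‖2 * Real.pi * I * n‖ = 2 * Real.pi * |(n : ℝ)| := by
  rw [norm_mul, norm_mul, norm_mul, norm_I, norm_intCast, norm_ofNat, norm_real,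
    Real.norm_of_nonneg Real.pi_pos.le, mul_one]

/-- `expSlope k ξ = (exp ξ - ∑_{j < k} ξ ^ j / j!) / ξ ^ k`, extended continuously to `ξ = 0`. -/
noncomputable def expSlope (k : ℕ) : ℂ → ℂ := (swap dslope 0)^[k] exp

@[simp]
theorem expSlope_zero : expSlope 0 = exp :=
  rfl

theorem expSlope_succ (k : ℕ) : expSlope (k + 1) = dslope (expSlope k) 0 :=
  iterate_succ_apply' _ _ _

theorem differentiable_expSlope (k : ℕ) : Differentiable ℂ (expSlope k) := by
  induction k with
  | zero => exact differentiable_exp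
  | succ k ih => rw [expSlope_succ]; exact Complex.differentiable_dslope ih 0

theorem expSlope_apply_zero (k : ℕ) : expSlope k 0 = (k.factorial : ℂ)⁻¹ := by
  have hexp : HasFPowerSeriesAt exp (NormedSpace.expSeries ℂ ℂ) 0 := by
    rw [exp_eq_exp_ℂ]; exact NormedSpace.exp_hasFPowerSeriesAt_zero
  rw [expSlope, ← (hexp.has_fpower_series_iterate_dslope_fslope k).coeff_zero 1,
    ← FormalMultilinearSeries.coeff, FormalMultilinearSeries.coeff_iterate_fslope, zero_add]
  simpa using NormedSpace.expSeries_apply_eq (𝕂 := ℂ) (1 : ℂ) k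

theorem mul_expSlope_succ (k : ℕ) (ξ : ℂ) :
    ξ * expSlope (k + 1) ξ = expSlope k ξ - (k.factorial : ℂ)⁻¹ := by
  simpa [expSlope_succ, expSlope_apply_zero] using sub_smul_dslope (expSlope k) 0 ξ

theorem mul_expSlope_one (ξ : ℂ) : ξ * expSlope 1 ξ = exp ξ - 1 := by
  simpa using mul_expSlope_succ 0 ξ

theorem expSlope_one_eq_zero_iff {ξ : ℂ} :
    expSlope 1 ξ = 0 ↔ ∃ n : ℤ, n ≠ 0 ∧ ξ = 2 * Real.pi * I * n := by
  have hmul := mul_expSlope_one ξ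
  constructor
  · intro h
    obtain ⟨n, hn⟩ := exp_eq_one_iff.mp (by linear_combination -hmul + ξ * h)
    refine ⟨n, ?_, by rw [hn]; ring⟩
    rintro rfl
    simp [show ξ = 0 by simpa using hn, expSlope_apply_zero] at h
  · rintro ⟨n, hn, rfl⟩
    have hexp : exp (2 * Real.pi * I * n) = 1 := exp_eq_one_iff.mpr ⟨n, by ring⟩
    refine (mul_eq_zero.mp (hmul.trans (sub_eq_zero.mpr hexp))).resolve_left ?_
    simp [hn, Real.pi_ne_zero, I_ne_zero]

theorem expSlope_one_ne_zero_of_norm_lt {ξ : ℂ} (hξ : ‖ξ‖ < 2 * Real.pi) :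
    expSlope 1 ξ ≠ 0 := by
  intro h
  obtain ⟨n, hn, rfl⟩ := expSlope_one_eq_zero_iff.mp h
  rw [norm_two_pi_I_mul_intCast] at hξ
  have : (1 : ℝ) ≤ |(n : ℝ)| := by exact_mod_cast Int.one_le_abs hn
  nlinarith [Real.pi_pos]

noncomputable def borelStirling (ξ : ℂ) : ℂ :=
  (expSlope 2 ξ / 2 - expSlope 3 ξ) / expSlope 1 ξ

theorem analyticAt_borelStirling {ξ : ℂ} (hξ : expSlope 1 ξ ≠ 0) :
    AnalyticAt ℂ borelStirling ξ := by
  have hE (k : ℕ) : AnalyticAt ℂ (expSlope k) ξ := (differentiable_expSlope k).analyticAt ξ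
  exact (((hE 2).div_const).sub (hE 3)).div (hE 1) hξ

theorem borelStirling_eq {ξ : ℂ} (hξ : ξ ≠ 0) (h₁ : expSlope 1 ξ ≠ 0) :
    borelStirling ξ = ξ ^ (-2 : ℤ) * (ξ / 2 * (cosh (ξ / 2) / sinh (ξ / 2)) - 1) := by
  have e₁ := mul_expSlope_one ξ
  have e₂ : ξ * expSlope 2 ξ = expSlope 1 ξ - 1 := by simpa using mul_expSlope_succ 1 ξ
  have e₃ : ξ * expSlope 3 ξ = expSlope 2 ξ - 1 / 2 := by simpa using mul_expSlope_succ 2 ξ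
  rw [borelStirling, cosh_half_div_sinh_half, ← e₁, zpow_neg, zpow_ofNat]
  field_simp
  linear_combination e₁ + (ξ - 2) * e₂ - 2 * ξ * e₃

theorem mul_deriv_expSlope_one_of_eq_zero {p : ℂ} (h₁ : expSlope 1 p = 0) :
    p * deriv (expSlope 1) p = 1 := by
  have hexp : exp p = 1 := by linear_combination -(mul_expSlope_one p) + p * h₁
  have hlhs := (hasDerivAt_id p).mul ((differentiable_expSlope 1).differentiableAt.hasDerivAt)
  have hrhs := (hasDerivAt_exp p).sub_const 1
  rw [← funext mul_expSlope_one] at hrhs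
  simpa [h₁, hexp] using hlhs.unique hrhs

theorem borelStirling_eq_div_sub_of_expSlope_one_eq_zero {p : ℂ} (h₁ : expSlope 1 p = 0) :
    ∃ g : ℂ → ℂ, AnalyticAt ℂ g p ∧ g p ≠ 0 ∧ ∀ ξ, borelStirling ξ = g ξ / (ξ - p) := by
  set Q := dslope (expSlope 1) p
  have hQ : p * Q p = 1 := by
    rw [show Q p = deriv (expSlope 1) p from dslope_same _ _]
    exact mul_deriv_expSlope_one_of_eq_zero h₁
  have hE₁ (ξ : ℂ) : expSlope 1 ξ = (ξ - p) * Q ξ := by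
    simpa [h₁] using (sub_smul_dslope (expSlope 1) p ξ).symm
  have hN : p ^ 2 * (expSlope 2 p / 2 - expSlope 3 p) = 1 := by
    have e₂ : p * expSlope 2 p = expSlope 1 p - 1 := by simpa using mul_expSlope_succ 1 p
    have e₃ : p * expSlope 3 p = expSlope 2 p - 1 / 2 := by simpa using mul_expSlope_succ 2 p
    linear_combination (p / 2 - 1) * e₂ - p * e₃ + (p / 2 - 1) * h₁
  refine ⟨fun ξ ↦ (expSlope 2 ξ / 2 - expSlope 3 ξ) / Q ξ, ?_, ?_, fun ξ ↦ ?_⟩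
  · have hE (k : ℕ) : AnalyticAt ℂ (expSlope k) p := (differentiable_expSlope k).analyticAt p
    exact ((hE 2).div_const.sub (hE 3)).div
      ((Complex.differentiable_dslope (differentiable_expSlope 1) p).analyticAt p)
      (right_ne_zero_of_mul_eq_one hQ)
  · exact div_ne_zero (right_ne_zero_of_mul_eq_one hN) (right_ne_zero_of_mul_eq_one hQ)
  · rw [borelStirling, hE₁, div_div, mul_comm]

theorem borel_stirling_meromorphic_continuation :
    ∃ f : ℂ → ℂ,
      (∀ ξ : ℂ, 0 < ‖ξ‖ → ‖ξ‖ < 2 * Real.pi →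
        f ξ = ξ ^ (-2 : ℤ) * (ξ / 2 * (Complex.cosh (ξ / 2) / Complex.sinh (ξ / 2)) - 1)) ∧
      AnalyticAt ℂ f 0 ∧
      (∀ ξ : ℂ, (∀ n : ℤ, n ≠ 0 → ξ ≠ 2 * Real.pi * Complex.I * n) → AnalyticAt ℂ f ξ) ∧
      (∀ n : ℤ, n ≠ 0 →
        ∃ g : ℂ → ℂ, AnalyticAt ℂ g (2 * Real.pi * Complex.I * n) ∧
          g (2 * Real.pi * Complex.I * n) ≠ 0 ∧
          ∀ᶠ ξ in nhdsWithin (2 * Real.pi * Complex.I * n) {(2 * Real.pi * Complex.I * n)}ᶜ,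
            f ξ = g ξ / (ξ - 2 * Real.pi * Complex.I * n)) := by
  refine ⟨borelStirling, fun ξ h₀ h₂π ↦ ?_, ?_, fun ξ hξ ↦ ?_, fun n hn ↦ ?_⟩
  · exact borelStirling_eq (norm_pos_iff.mp h₀) (expSlope_one_ne_zero_of_norm_lt h₂π)
  · exact analyticAt_borelStirling (by simp [expSlope_apply_zero])
  · refine analyticAt_borelStirling fun h ↦ ?_
    obtain ⟨n, hn, rfl⟩ := expSlope_one_eq_zero_iff.mp h
    exact hξ n hn rfl
  · obtain ⟨g, hg, hgp, hfg⟩ := borelStirling_eq_div_sub_of_expSlope_one_eq_zero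
      (expSlope_one_eq_zero_iff.mpr ⟨n, hn, rfl⟩)
    exact ⟨g, hg, hgp, Filter.Eventually.of_forall hfg⟩
end

section
/- For every complex c with Re(c) < 1/2 and every ξ ∈ ℂ \ ℝ_{≤0}, the integral ∫_ℝ (ξ + e^Q - Q - 1)^{c - 3/2} dQ converges absolutely, where powers use the principal branch. -/
/-!
Write `g Q = exp Q - Q - 1 ≥ 0`. Since `ξ` lies off the ray `(-∞, 0]`, the points `ξ + t`,
`t ≥ 0`, keep a positive distance from that ray and grow like `t`, so
`‖ξ + g Q‖ ≳ 1 + g Q ≳ 1 + |Q|`. As `‖w ^ s‖ ≤ exp (π |Im s|) ‖w‖ ^ Re s`, the integrand is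
`O((1 + |Q|) ^ (Re c - 3/2))`, which is integrable on `ℝ` because `Re c - 3/2 < -1`.
-/

open MeasureTheory Module Asymptotics Filter

section

variable {E : Type*} [NormedAddCommGroup E] [NormedSpace ℝ E] [FiniteDimensional ℝ E]
  [MeasurableSpace E] [BorelSpace E] {μ : Measure E} [μ.IsAddHaarMeasure]

theorem integrable_cpow_of_mul_one_add_norm_le {f : E → ℂ} {s : ℂ} {δ : ℝ}
    (hf : AEMeasurable f μ) (hδ : 0 < δ) (hs : s.re < -finrank ℝ E)
    (hle : ∀ x, δ * (1 + ‖x‖) ≤ ‖f x‖) :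
    Integrable (fun x => f x ^ s) μ := by
  have hcpow : (fun x => f x ^ s) =O[⊤] fun x => ‖f x‖ ^ s.re :=
    Complex.isBigO_cpow_rpow (g := fun _ => s) (isBoundedUnder_const (a := |s.im|))
  have hnorm : (fun x => ‖f x‖ ^ s.re) =O[⊤] fun x => (1 + ‖x‖) ^ s.re := by
    refine isBigO_top.2 ⟨δ ^ s.re, fun x => ?_⟩
    have hpos : 0 < δ * (1 + ‖x‖) := by positivity
    calc ‖‖f x‖ ^ s.re‖ = ‖f x‖ ^ s.re := Real.norm_of_nonneg (by positivity)
      _ ≤ (δ * (1 + ‖x‖)) ^ s.re := Real.rpow_le_rpow_of_nonpos hpos (hle x) (by linarith)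
      _ = δ ^ s.re * ‖(1 + ‖x‖) ^ s.re‖ := by
        rw [Real.mul_rpow hδ.le (by positivity), Real.norm_of_nonneg (by positivity)]
  have hint : Integrable (fun x : E => (1 + ‖x‖) ^ s.re) μ := by
    simpa using integrable_one_add_norm (μ := μ) (r := -s.re) (by linarith)
  exact (hcpow.trans hnorm).integrable (hf.pow_const s).aestronglyMeasurable hint

end

theorem exists_pos_mul_one_add_le_norm_add_ofReal {ξ : ℂ} (hξ : ∀ x : ℝ, x ≤ 0 → ξ ≠ x) :
    ∃ δ > 0, ∀ t : ℝ, 0 ≤ t → δ * (1 + t) ≤ ‖ξ + t‖ := by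
  set ray : Set ℂ := ((↑) : ℝ → ℂ) '' Set.Iic 0
  have hray : IsClosed ray :=
    Complex.isometry_ofReal.isClosedEmbedding.isClosedMap _ isClosed_Iic
  have hd : 0 < Metric.infDist ξ ray :=
    (hray.notMem_iff_infDist_pos (Set.nonempty_Iic.image ((↑) : ℝ → ℂ))).1
      (by rintro ⟨x, hx, rfl⟩; exact hξ x hx rfl)
  set d := Metric.infDist ξ ray
  have hdist (t : ℝ) (ht : 0 ≤ t) : d ≤ ‖ξ + t‖ := by
    have hmem : ((-t : ℝ) : ℂ) ∈ ray := Set.mem_image_of_mem _ (by simpa using ht)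
    simpa [dist_eq_norm] using Metric.infDist_le_dist_of_mem (x := ξ) hmem
  have hgrowth (t : ℝ) (ht : 0 ≤ t) : t - ‖ξ‖ ≤ ‖ξ + t‖ := by
    have := norm_sub_norm_le (t : ℂ) (-ξ)
    rw [Complex.norm_real, Real.norm_of_nonneg ht, norm_neg, sub_neg_eq_add, add_comm] at this
    exact this
  refine ⟨min (d / (2 * (1 + ‖ξ‖))) (1 / 2), by positivity, fun t ht => ?_⟩
  rcases le_or_gt t (1 + 2 * ‖ξ‖) with hsmall | hlarge
  · calc min (d / (2 * (1 + ‖ξ‖))) (1 / 2) * (1 + t)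
        ≤ d / (2 * (1 + ‖ξ‖)) * (2 * (1 + ‖ξ‖)) :=
          mul_le_mul (min_le_left _ _) (by linarith) (by positivity) (by positivity)
      _ = d := by field_simp
      _ ≤ ‖ξ + t‖ := hdist t ht
  · calc min (d / (2 * (1 + ‖ξ‖))) (1 / 2) * (1 + t) ≤ 1 / 2 * (1 + t) :=
          mul_le_mul_of_nonneg_right (min_le_right _ _) (by linarith)
      _ ≤ t - ‖ξ‖ := by linarith
      _ ≤ ‖ξ + t‖ := hgrowth t ht

theorem Real.one_add_abs_le_two_mul_exp_sub (x : ℝ) : 1 + |x| ≤ 2 * (Real.exp x - x) := by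
  have hexp := Real.add_one_le_exp x
  rcases le_or_gt x 0 with hx | hx
  · rw [abs_of_nonpos hx]
    linarith [Real.exp_pos x]
  · rw [abs_of_pos hx]
    nlinarith [Real.quadratic_le_exp_of_nonneg hx.le]

theorem real_major_integrand_integrable (c : ℂ) (hc : c.re < 1/2)
    (ξ : ℂ) (hξ : ∀ x : ℝ, x ≤ 0 → ξ ≠ x) :
    Integrable (fun Q : ℝ =>
      (ξ + Real.exp Q - Q - 1) ^ (c - 3/2 : ℂ)) := by
  obtain ⟨δ, hδ, hξδ⟩ := exists_pos_mul_one_add_le_norm_add_ofReal hξ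
  refine integrable_cpow_of_mul_one_add_norm_le (δ := δ / 2) (by fun_prop) (by positivity)
    (by norm_num; linarith) fun Q => ?_
  have hg : 0 ≤ Real.exp Q - Q - 1 := by linarith [Real.add_one_le_exp Q]
  calc δ / 2 * (1 + ‖Q‖) ≤ δ * (1 + (Real.exp Q - Q - 1)) := by
        rw [Real.norm_eq_abs]
        nlinarith [Real.one_add_abs_le_two_mul_exp_sub Q]
    _ ≤ ‖ξ + ((Real.exp Q - Q - 1 : ℝ) : ℂ)‖ := hξδ _ hg
    _ = ‖ξ + Real.exp Q - Q - 1‖ := by push_cast; ring_nf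
end
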